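/- arXiv:1412.1453 — 2 statements merged into one kernel-verified Lean document; each statement's English description precedes it below -/
import Mathlib

section
/- For ξ ∈ ℝ, let ψ(ξ) = −imξ + δ(√(a² − (b + iξ)²) − √(a² − b²)), where m ∈ ℝ, δ > 0, 0 < |b| < a (the normal inverse Gaussian symbol with the principal branch of the square root). Then for every λ > 1, lim_{|ξ|→∞} |ψ(ξ)|/|ξ|^λ = 0, and for λ < 1 the limit superior of |ψ(ξ)|/|ξ|^λ as |ξ|→∞ is infinite; hence the Blumenthal–Gettoor index of order 0 of ψ equals 1. -/
/-!
The symbol grows exactly linearly: `‖ψ ξ‖ ≤ A |ξ| + B` because `‖√z‖ = √‖z‖`, and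
`‖ψ ξ‖ ≥ |Re ψ ξ| ≥ δ (|ξ| - √(a² - b²))` because any square root `w` of
`z = a² - (b + iξ)²` has `(Re w)² ≥ Re z = a² - b² + ξ² ≥ ξ²`. Hence `ψ =Θ(ξ)` as `|ξ| → ∞`,
so `‖ψ ξ‖ / |ξ|^λ =Θ |ξ|^(1-λ)`, which tends to `0` iff `λ > 1` and to `∞` for `λ < 1`.
-/

open Filter Asymptotics Topology

namespace Complex

lemma cpow_one_div_two_sq (z : ℂ) : (z ^ ((1 : ℂ) / 2)) ^ 2 = z := by
  rw [one_div]
  exact cpow_ofNat_inv_pow z 2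

lemma norm_cpow_one_div_two (z : ℂ) : ‖z ^ ((1 : ℂ) / 2)‖ = √‖z‖ := by
  rw [Real.sqrt_eq_rpow, ← norm_cpow_real]
  norm_num

lemma re_le_re_cpow_one_div_two_sq (z : ℂ) : z.re ≤ (z ^ ((1 : ℂ) / 2)).re ^ 2 := by
  have hre := congrArg re (cpow_one_div_two_sq z)
  rw [pow_two, mul_re] at hre
  nlinarith [sq_nonneg (z ^ ((1 : ℂ) / 2)).im]

end Complex

section GrowthIndex

instance comap_abs_atTop_neBot : (comap (abs : ℝ → ℝ) atTop).NeBot :=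
  neBot_of_le tendsto_abs_atTop_atTop.le_comap

variable {E : Type*} [NormedAddCommGroup E] {f : ℝ → E}

lemma isBigO_comap_abs_atTop_of_norm_le {A B : ℝ} (h : ∀ x, ‖f x‖ ≤ A * |x| + B) :
    f =O[comap abs atTop] fun x => x := by
  refine IsBigO.of_bound (|A| + |B|) ?_
  filter_upwards [tendsto_comap.eventually (eventually_ge_atTop 1)] with x hx
  rw [Real.norm_eq_abs]
  nlinarith [h x, le_abs_self A, le_abs_self B, abs_nonneg A, abs_nonneg B]

lemma isBigO_comap_abs_atTop_of_le_norm {c d : ℝ} (hc : 0 < c)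
    (h : ∀ x, c * |x| - d ≤ ‖f x‖) : (fun x => x) =O[comap abs atTop] f := by
  refine IsBigO.of_bound (2 / c) ?_
  filter_upwards [tendsto_comap.eventually (eventually_ge_atTop (2 * d / c))] with x hx
  rw [Real.norm_eq_abs, div_mul_eq_mul_div, le_div_iff₀ hc]
  rw [div_le_iff₀ hc] at hx
  linarith [h x]

lemma tendsto_abs_rpow_comap_abs_atTop_nhds_zero_iff {s : ℝ} :
    Tendsto (fun x : ℝ => |x| ^ s) (comap abs atTop) (𝓝 0) ↔ s < 0 := by
  refine ⟨fun h => ?_, fun hs => ?_⟩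
  · by_contra! hs
    have hge : ∀ᶠ x : ℝ in comap abs atTop, 1 ≤ |x| ^ s :=
      tendsto_comap.eventually (eventually_ge_atTop 1) |>.mono fun x hx => Real.one_le_rpow hx hs
    linarith [ge_of_tendsto h hge]
  · simpa only [neg_neg, Function.comp_def] using
      (tendsto_rpow_neg_atTop (neg_pos.2 hs)).comp tendsto_comap

lemma tendsto_abs_rpow_comap_abs_atTop_atTop {s : ℝ} (hs : 0 < s) :
    Tendsto (fun x : ℝ => |x| ^ s) (comap abs atTop) atTop :=
  (tendsto_rpow_atTop hs).comp tendsto_comap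

lemma Asymptotics.IsTheta.norm_div_abs_rpow (hf : f =Θ[comap abs atTop] fun x => x) (lam : ℝ) :
    (fun x => ‖f x‖ / |x| ^ lam) =Θ[comap abs atTop] fun x => |x| ^ (1 - lam) := by
  have hnorm : (fun x => ‖f x‖) =Θ[comap abs atTop] fun x : ℝ => |x| :=
    isTheta_norm_left.2 (isTheta_norm_right.2 hf)
  refine (hnorm.div (isTheta_refl _ _)).trans_eventuallyEq ?_
  filter_upwards [tendsto_comap.eventually (eventually_gt_atTop 0)] with x hx
  rw [Real.rpow_sub hx, Real.rpow_one]

lemma Asymptotics.IsTheta.tendsto_norm_div_abs_rpow_nhds_zero_iff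
    (hf : f =Θ[comap abs atTop] fun x => x) {lam : ℝ} :
    Tendsto (fun x => ‖f x‖ / |x| ^ lam) (comap abs atTop) (𝓝 0) ↔ 1 < lam := by
  rw [(hf.norm_div_abs_rpow lam).tendsto_zero_iff, tendsto_abs_rpow_comap_abs_atTop_nhds_zero_iff,
    sub_neg]

lemma Asymptotics.IsTheta.tendsto_norm_div_abs_rpow_atTop
    (hf : f =Θ[comap abs atTop] fun x => x) {lam : ℝ} (hlam : lam < 1) :
    Tendsto (fun x => ‖f x‖ / |x| ^ lam) (comap abs atTop) atTop := by
  have h := (hf.norm_div_abs_rpow lam).tendsto_norm_atTop_iff.2 <| by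
    simpa only [Function.comp_def, Real.norm_eq_abs, abs_abs, Real.abs_rpow_of_nonneg,
      abs_nonneg] using tendsto_abs_rpow_comap_abs_atTop_atTop (sub_pos.2 hlam)
  simpa only [Function.comp_def, Real.norm_eq_abs, abs_div, abs_norm, Real.abs_rpow_of_nonneg,
    abs_nonneg, abs_abs] using h

end GrowthIndex

section NormalInverseGaussian

variable (m δ a b : ℝ)

noncomputable def nigRadicand (ξ : ℝ) : ℂ := (a ^ 2 : ℂ) - ((b : ℂ) + Complex.I * ξ) ^ 2

noncomputable def nigSymbol (ξ : ℝ) : ℂ :=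
  -Complex.I * (m * ξ) +
    (δ : ℂ) * (nigRadicand a b ξ ^ ((1 : ℂ) / 2) - (√(a ^ 2 - b ^ 2) : ℂ))

lemma nigRadicand_re (ξ : ℝ) : (nigRadicand a b ξ).re = a ^ 2 - b ^ 2 + ξ ^ 2 := by
  simp only [nigRadicand, pow_two, Complex.sub_re, Complex.mul_re, Complex.add_re,
    Complex.add_im, Complex.ofReal_re, Complex.ofReal_im, Complex.I_re, Complex.I_im,
    Complex.mul_im]
  ring

lemma norm_nigRadicand_le (ξ : ℝ) : ‖nigRadicand a b ξ‖ ≤ (|a| + |b| + |ξ|) ^ 2 :=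
  calc ‖nigRadicand a b ξ‖ ≤ ‖(a : ℂ) ^ 2‖ + ‖((b : ℂ) + Complex.I * ξ) ^ 2‖ := norm_sub_le _ _
    _ ≤ |a| ^ 2 + (|b| + |ξ|) ^ 2 := by
        rw [norm_pow, norm_pow, Complex.norm_real, Real.norm_eq_abs]
        gcongr
        refine (norm_add_le _ _).trans_eq ?_
        simp
    _ ≤ (|a| + |b| + |ξ|) ^ 2 := by nlinarith [abs_nonneg a, abs_nonneg b, abs_nonneg ξ]

lemma norm_nigRadicand_cpow_le (ξ : ℝ) :
    ‖nigRadicand a b ξ ^ ((1 : ℂ) / 2)‖ ≤ |a| + |b| + |ξ| := by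
  rw [Complex.norm_cpow_one_div_two]
  exact (Real.sqrt_le_sqrt (norm_nigRadicand_le a b ξ)).trans_eq (Real.sqrt_sq (by positivity))

variable {a b} in
lemma abs_le_abs_re_nigRadicand_cpow (hab : b ^ 2 ≤ a ^ 2) (ξ : ℝ) :
    |ξ| ≤ |(nigRadicand a b ξ ^ ((1 : ℂ) / 2)).re| := by
  refine sq_le_sq.1 (le_trans ?_ (Complex.re_le_re_cpow_one_div_two_sq _))
  rw [nigRadicand_re]
  linarith

lemma norm_nigSymbol_le (ξ : ℝ) :
    ‖nigSymbol m δ a b ξ‖ ≤ (|m| + |δ|) * |ξ| + |δ| * (|a| + |b| + √(a ^ 2 - b ^ 2)) := by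
  have hroot : ‖nigRadicand a b ξ ^ ((1 : ℂ) / 2) - (√(a ^ 2 - b ^ 2) : ℂ)‖ ≤
      |a| + |b| + |ξ| + √(a ^ 2 - b ^ 2) := by
    refine (norm_sub_le _ _).trans (add_le_add (norm_nigRadicand_cpow_le a b ξ) ?_)
    rw [Complex.norm_real, Real.norm_of_nonneg (Real.sqrt_nonneg _)]
  calc ‖nigSymbol m δ a b ξ‖ ≤ |m| * |ξ| + |δ| * (|a| + |b| + |ξ| + √(a ^ 2 - b ^ 2)) := by
        refine (norm_add_le _ _).trans (add_le_add (by simp) ?_)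
        rw [norm_mul, Complex.norm_real, Real.norm_eq_abs]
        gcongr
    _ = (|m| + |δ|) * |ξ| + |δ| * (|a| + |b| + √(a ^ 2 - b ^ 2)) := by ring

variable {δ a b} in
lemma le_norm_nigSymbol (hδ : 0 ≤ δ) (hab : b ^ 2 ≤ a ^ 2) (ξ : ℝ) :
    δ * |ξ| - δ * √(a ^ 2 - b ^ 2) ≤ ‖nigSymbol m δ a b ξ‖ := by
  set w := nigRadicand a b ξ ^ ((1 : ℂ) / 2)
  set c := √(a ^ 2 - b ^ 2)
  have hre : (nigSymbol m δ a b ξ).re = δ * (w.re - c) := by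
    simp only [nigSymbol, Complex.add_re, Complex.mul_re, Complex.sub_re, Complex.neg_re,
      Complex.neg_im, Complex.I_re, Complex.I_im, Complex.ofReal_re, Complex.ofReal_im,
      Complex.mul_im]
    ring
  calc δ * |ξ| - δ * c ≤ δ * (|w.re| - |c|) := by
        rw [abs_of_nonneg (Real.sqrt_nonneg _), ← mul_sub]
        exact mul_le_mul_of_nonneg_left
          (sub_le_sub_right (abs_le_abs_re_nigRadicand_cpow hab ξ) c) hδ
    _ ≤ δ * |w.re - c| := by gcongr; exact abs_sub_abs_le_abs_sub _ _
    _ = |(nigSymbol m δ a b ξ).re| := by rw [hre, abs_mul, abs_of_nonneg hδ]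
    _ ≤ ‖nigSymbol m δ a b ξ‖ := Complex.abs_re_le_norm _

variable {δ a b} in
lemma isTheta_nigSymbol (hδ : 0 < δ) (hab : b ^ 2 ≤ a ^ 2) :
    nigSymbol m δ a b =Θ[comap abs atTop] fun ξ => ξ :=
  ⟨isBigO_comap_abs_atTop_of_norm_le (norm_nigSymbol_le m δ a b),
    isBigO_comap_abs_atTop_of_le_norm hδ (le_norm_nigSymbol m hδ.le hab)⟩

end NormalInverseGaussian

theorem nig_index_general (m δ a b : ℝ) (hδ : 0 < δ) (hba : |b| < a)
    (ψ : ℝ → ℂ)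
    (hψ : ∀ ξ : ℝ, ψ ξ = -Complex.I * (m * ξ) +
      (δ : ℂ) * (((a ^ 2 : ℂ) - ((b : ℂ) + Complex.I * ξ) ^ 2) ^ ((1 : ℂ) / 2) -
        (Real.sqrt (a ^ 2 - b ^ 2) : ℂ))) :
    (∀ lam : ℝ, 1 < lam →
      Tendsto (fun ξ : ℝ => ‖ψ ξ‖ / |ξ| ^ lam)
        (Filter.comap (fun ξ : ℝ => |ξ|) atTop) (nhds 0)) ∧
    (∀ lam : ℝ, 0 < lam → lam < 1 →
      Filter.limsup (fun ξ : ℝ => ((‖ψ ξ‖ / |ξ| ^ lam : ℝ) : EReal))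
        (Filter.comap (fun ξ : ℝ => |ξ|) atTop) = ⊤) ∧
    sInf {lam : ℝ | 0 < lam ∧
      Tendsto (fun ξ : ℝ => ‖ψ ξ‖ / |ξ| ^ lam)
        (Filter.comap (fun ξ : ℝ => |ξ|) atTop) (nhds 0)} = 1 := by
  have hab : b ^ 2 ≤ a ^ 2 := sq_le_sq.2 (hba.le.trans (le_abs_self a))
  obtain rfl : ψ = nigSymbol m δ a b := funext hψ
  have hΘ := isTheta_nigSymbol m hδ hab
  have hindex : {lam : ℝ | 0 < lam ∧ Tendsto (fun ξ : ℝ => ‖nigSymbol m δ a b ξ‖ / |ξ| ^ lam)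
      (comap (fun ξ : ℝ => |ξ|) atTop) (𝓝 0)} = Set.Ioi 1 := by
    ext lam
    simp only [Set.mem_ofPred_eq, Set.mem_Ioi, hΘ.tendsto_norm_div_abs_rpow_nhds_zero_iff]
    exact ⟨And.right, fun h => ⟨one_pos.trans h, h⟩⟩
  refine ⟨fun lam => hΘ.tendsto_norm_div_abs_rpow_nhds_zero_iff.2,
    fun lam _ hlam => ?_, by rw [hindex, csInf_Ioi]⟩
  exact (EReal.tendsto_coe_nhds_top_iff.2 (hΘ.tendsto_norm_div_abs_rpow_atTop hlam)).limsup_eq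

/-- The normal inverse Gaussian symbol
`ψ(ξ) = −imξ + δ(√(a² − (b+iξ)²) − √(a² − b²))` has Blumenthal–Getoor index of
order 0 equal to 1: `|ψ(ξ)|/|ξ|^λ → 0` as `|ξ| → ∞` for every `λ > 1`, the limit
superior is infinite for `0 < λ < 1`, and the infimum of admissible `λ` is 1. -/
theorem nig_index (m δ a b : ℝ) (hδ : 0 < δ) (hb : 0 < |b|) (hba : |b| < a)
    (ψ : ℝ → ℂ)
    (hψ : ∀ ξ : ℝ, ψ ξ = -Complex.I * (m * ξ) +
      (δ : ℂ) * (((a ^ 2 : ℂ) - ((b : ℂ) + Complex.I * ξ) ^ 2) ^ ((1 : ℂ) / 2) -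
        (Real.sqrt (a ^ 2 - b ^ 2) : ℂ))) :
    (∀ lam : ℝ, 1 < lam →
      Tendsto (fun ξ : ℝ => ‖ψ ξ‖ / |ξ| ^ lam)
        (Filter.comap (fun ξ : ℝ => |ξ|) atTop) (nhds 0)) ∧
    (∀ lam : ℝ, 0 < lam → lam < 1 →
      Filter.limsup (fun ξ : ℝ => ((‖ψ ξ‖ / |ξ| ^ lam : ℝ) : EReal))
        (Filter.comap (fun ξ : ℝ => |ξ|) atTop) = ⊤) ∧
    sInf {lam : ℝ | 0 < lam ∧
      Tendsto (fun ξ : ℝ => ‖ψ ξ‖ / |ξ| ^ lam)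
        (Filter.comap (fun ξ : ℝ => |ξ|) atTop) (nhds 0)} = 1 :=
  nig_index_general m δ a b hδ hba ψ hψ
end

section
/- Let k ∈ ℕ and R > 0, and let h : ℝ^d → ℝ be a C^k function with h(0) = 0, h(x) = 1 for |x| ≥ R, ‖h‖_{C^k_b} ≤ 1, and |∂^α h(x)| ≤ |x|^{k − |α| + 1} for all multi-indices |α| ≤ k. Let ψ ∈ C^k(ℝ^d \ {0}) satisfy sup_{0 < |ξ| ≤ 1} |ξ|^{|α| − γ} |∂^α ψ(ξ)| < ∞ for some γ > 0 and all |α| ≤ k, and sup_{|ξ| ≥ 1} ⟨ξ⟩^{|α| − s} |∂^α ψ(ξ)| < ∞ for some s > 0. Define ψ_n(ξ) := h(nξ) ψ(ξ). Then for every multi-index α with |α| ≤ k, sup_{ξ ≠ 0} |ξ|^{|α|} |∂^α(ψ_n(ξ) − ψ(ξ))| → 0 as n → ∞. -/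
/-- Iterated partial derivative along a list of coordinate directions
(a list `[i₁, …, iₘ]` encodes the multi-index derivative `∂_{x_{i₁}} ⋯ ∂_{x_{iₘ}}`). -/
noncomputable def mpartial {d : ℕ} {F : Type*} [NormedAddCommGroup F] [NormedSpace ℝ F] :
    List (Fin d) → (EuclideanSpace ℝ (Fin d) → F) → EuclideanSpace ℝ (Fin d) → F
  | [], f => f
  | (i :: l), f => mpartial l (fun y => fderiv ℝ f y (EuclideanSpace.single i 1))

/-
Write `ψₙ - ψ = (h(n·) - 1) ψ`. The factor `h(n·) - 1` vanishes on `{|ξ| > R/n}`, so there the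
derivatives of `ψₙ - ψ` vanish. On the ball `|ξ| ≤ R/n` the Leibniz rule splits `∂^α` over the
two factors; the chain rule gives `|∂^β (h(n·) - 1)| ≤ 2 n^{|β|}`, and the bound on `ψ` near the
origin gives `|ξ|^{|α - β|} |∂^{α-β} ψ(ξ)| ≤ C |ξ|^γ`. Since `n|ξ| ≤ R`, every term of
`|ξ|^{|α|} |∂^α(ψₙ - ψ)(ξ)|` is at most `2 C R^{|β|} (R/n)^γ`, which tends to `0` because `γ > 0`.
-/

open Filter Topology

/-- All splittings of a list into a pair of complementary subsequences, with multiplicity. -/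
def List.unshuffles {α : Type*} : List α → List (List α × List α)
  | [] => [([], [])]
  | i :: l => (unshuffles l).map (fun p => (i :: p.1, p.2)) ++
      (unshuffles l).map (fun p => (p.1, i :: p.2))

theorem List.length_add_length_of_mem_unshuffles {α : Type*} {l : List α} {p : List α × List α}
    (hp : p ∈ l.unshuffles) : p.1.length + p.2.length = l.length := by
  induction l generalizing p with
  | nil => simp_all [unshuffles]
  | cons i l ih =>
    simp only [unshuffles, mem_append, mem_map] at hp
    rcases hp with ⟨q, hq, rfl⟩ | ⟨q, hq, rfl⟩ <;> simp [← ih hq] <;> omega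

section mpartial

variable {d : ℕ} {F : Type*} [NormedAddCommGroup F] [NormedSpace ℝ F]

theorem mpartial_cons (i : Fin d) (l : List (Fin d)) (f : EuclideanSpace ℝ (Fin d) → F) :
    mpartial (i :: l) f = mpartial l (fun y => fderiv ℝ f y (EuclideanSpace.single i 1)) :=
  rfl

theorem mpartial_zero (l : List (Fin d)) : mpartial l (0 : EuclideanSpace ℝ (Fin d) → F) = 0 := by
  induction l with
  | nil => rfl
  | cons i l ih =>
    simp only [mpartial_cons, fderiv_zero, Pi.zero_apply, zero_apply]
    exact ih

theorem Filter.EventuallyEq.mpartial {f g : EuclideanSpace ℝ (Fin d) → F}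
    {x : EuclideanSpace ℝ (Fin d)} (h : f =ᶠ[𝓝 x] g) (l : List (Fin d)) :
    _root_.mpartial l f =ᶠ[𝓝 x] _root_.mpartial l g := by
  induction l generalizing f g with
  | nil => exact h
  | cons i l ih =>
    exact ih ((h.fderiv (𝕜 := ℝ)).mono fun y hy => congrArg (· (EuclideanSpace.single i 1)) hy)

theorem mpartial_eq_zero_of_eventuallyEq_zero {f : EuclideanSpace ℝ (Fin d) → F}
    {x : EuclideanSpace ℝ (Fin d)} (h : f =ᶠ[𝓝 x] 0) (l : List (Fin d)) :
    mpartial l f x = 0 := by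
  simpa [mpartial_zero] using (h.mpartial l).eq_of_nhds

theorem mpartial_const_smul (c : ℝ) (l : List (Fin d)) (f : EuclideanSpace ℝ (Fin d) → F) :
    mpartial l (c • f) = c • mpartial l f := by
  induction l generalizing f with
  | nil => rfl
  | cons i l ih => rw [mpartial_cons, mpartial_cons, fderiv_const_smul_field, ← ih]; rfl

theorem mpartial_comp_smul (c : ℝ) (l : List (Fin d)) (f : EuclideanSpace ℝ (Fin d) → F)
    (x : EuclideanSpace ℝ (Fin d)) :
    mpartial l (fun y => f (c • y)) x = c ^ l.length • mpartial l f (c • x) := by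
  induction l generalizing f with
  | nil => simp [mpartial]
  | cons i l ih =>
    set v := EuclideanSpace.single i (1 : ℝ)
    have hchain : (fun y => fderiv ℝ (fun y => f (c • y)) y v) =
        c • fun y => (fun z => fderiv ℝ f z v) (c • y) := by
      funext y
      simp [fderiv_comp_smul]
    rw [mpartial_cons, hchain, mpartial_const_smul, Pi.smul_apply,
      ih (fun z => fderiv ℝ f z v), smul_smul, ← pow_succ',
      mpartial_cons, List.length_cons]

theorem mpartial_sub_const (i : Fin d) (l : List (Fin d)) (f : EuclideanSpace ℝ (Fin d) → F)
    (c : F) : mpartial (i :: l) (fun y => f y - c) = mpartial (i :: l) f := by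
  simp only [mpartial_cons, fderiv_sub_const]

section OpenSet

variable {U : Set (EuclideanSpace ℝ (Fin d))} {x : EuclideanSpace ℝ (Fin d)}

theorem mpartial_congr_of_isOpen (hU : IsOpen U) {f g : EuclideanSpace ℝ (Fin d) → F}
    (hfg : Set.EqOn f g U) (hx : x ∈ U) (l : List (Fin d)) : mpartial l f x = mpartial l g x :=
  (Filter.eventuallyEq_of_mem (hU.mem_nhds hx) hfg |>.mpartial l).eq_of_nhds

theorem ContDiffOn.fderiv_apply_of_isOpen {f : EuclideanSpace ℝ (Fin d) → F} {m : ℕ}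
    (hf : ContDiffOn ℝ (m + 1 : ℕ) f U) (hU : IsOpen U) (v : EuclideanSpace ℝ (Fin d)) :
    ContDiffOn ℝ m (fun y => fderiv ℝ f y v) U :=
  (hf.fderiv_of_isOpen hU (by norm_cast)).clm_apply contDiffOn_const

theorem mpartial_add_of_isOpen (hU : IsOpen U) {l : List (Fin d)}
    {f g : EuclideanSpace ℝ (Fin d) → F} (hf : ContDiffOn ℝ l.length f U)
    (hg : ContDiffOn ℝ l.length g U) (hx : x ∈ U) :
    mpartial l (fun y => f y + g y) x = mpartial l f x + mpartial l g x := by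
  induction l generalizing f g with
  | nil => rfl
  | cons i l ih =>
    set v := EuclideanSpace.single i (1 : ℝ)
    have hderiv : Set.EqOn (fun y => fderiv ℝ (fun y => f y + g y) y v)
        (fun y => fderiv ℝ f y v + fderiv ℝ g y v) U := fun y hy => by
      dsimp only
      rw [fderiv_fun_add ((hf.differentiableOn (by simp)).differentiableAt (hU.mem_nhds hy))
        ((hg.differentiableOn (by simp)).differentiableAt (hU.mem_nhds hy))]
      rfl
    rw [mpartial_cons, mpartial_congr_of_isOpen hU hderiv hx]
    exact ih (hf.fderiv_apply_of_isOpen hU v) (hg.fderiv_apply_of_isOpen hU v)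

theorem mpartial_smul_of_isOpen (hU : IsOpen U) {l : List (Fin d)}
    {f : EuclideanSpace ℝ (Fin d) → ℝ} {g : EuclideanSpace ℝ (Fin d) → F}
    (hf : ContDiffOn ℝ l.length f U) (hg : ContDiffOn ℝ l.length g U) (hx : x ∈ U) :
    mpartial l (fun y => f y • g y) x =
      (l.unshuffles.map fun p => mpartial p.1 f x • mpartial p.2 g x).sum := by
  induction l generalizing f g with
  | nil => simp [List.unshuffles, mpartial]
  | cons i l ih =>
    set v := EuclideanSpace.single i (1 : ℝ)
    have hf' := hf.fderiv_apply_of_isOpen hU v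
    have hg' := hg.fderiv_apply_of_isOpen hU v
    have hfl : ContDiffOn ℝ l.length f U := hf.of_le (by norm_cast; simp)
    have hgl : ContDiffOn ℝ l.length g U := hg.of_le (by norm_cast; simp)
    have hderiv : Set.EqOn (fun y => fderiv ℝ (fun y => f y • g y) y v)
        (fun y => fderiv ℝ f y v • g y + f y • fderiv ℝ g y v) U := fun y hy => by
      dsimp only
      rw [fderiv_fun_smul ((hf.differentiableOn (by simp)).differentiableAt (hU.mem_nhds hy))
        ((hg.differentiableOn (by simp)).differentiableAt (hU.mem_nhds hy))]
      simp [add_comm]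
    rw [mpartial_cons, mpartial_congr_of_isOpen hU hderiv hx,
      mpartial_add_of_isOpen hU (f := fun y => fderiv ℝ f y v • g y)
        (g := fun y => f y • fderiv ℝ g y v) (hf'.smul hgl) (hfl.smul hg') hx,
      ih hf' hgl, ih hfl hg', List.unshuffles, List.map_append, List.sum_append, List.map_map,
      List.map_map]
    rfl

theorem norm_mpartial_smul_le_of_isOpen (hU : IsOpen U) {l : List (Fin d)}
    {f : EuclideanSpace ℝ (Fin d) → ℝ} {g : EuclideanSpace ℝ (Fin d) → F}
    (hf : ContDiffOn ℝ l.length f U) (hg : ContDiffOn ℝ l.length g U) (hx : x ∈ U) :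
    ‖mpartial l (fun y => f y • g y) x‖ ≤
      (l.unshuffles.map fun p => ‖mpartial p.1 f x‖ * ‖mpartial p.2 g x‖).sum := by
  rw [mpartial_smul_of_isOpen hU hf hg hx]
  refine (List.le_sum_of_subadditive norm norm_zero.le norm_add_le _).trans_eq ?_
  simp [List.map_map, Function.comp_def, norm_smul]

end OpenSet

end mpartial

theorem pow_mul_le_max_mul_rpow {r B C γ : ℝ} {b : ℕ} (hr : 0 < r)
    (h : r ^ ((b : ℝ) - γ) * B ≤ C) : r ^ b * B ≤ max C 0 * r ^ γ := by
  have hsplit : r ^ b = r ^ γ * r ^ ((b : ℝ) - γ) := by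
    rw [← Real.rpow_add hr, add_sub_cancel, Real.rpow_natCast]
  rw [hsplit, mul_assoc, mul_comm (max C 0)]
  exact mul_le_mul_of_nonneg_left (h.trans (le_max_left _ _)) (by positivity)

section Cutoff

variable {d : ℕ} {F : Type*} [NormedAddCommGroup F] [NormedSpace ℝ F]
  {h : EuclideanSpace ℝ (Fin d) → ℝ}

theorem norm_mpartial_comp_smul_sub_one_le {l : List (Fin d)}
    (hl : ∀ x, ‖mpartial l h x‖ ≤ 1) (c : ℝ) (x : EuclideanSpace ℝ (Fin d)) :
    ‖mpartial l (fun y => h (c • y) - 1) x‖ ≤ 2 * |c| ^ l.length := by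
  cases l with
  | nil =>
    have hx : ‖h (c • x)‖ ≤ 1 := hl (c • x)
    calc ‖h (c • x) - 1‖ ≤ ‖h (c • x)‖ + ‖(1 : ℝ)‖ := norm_sub_le _ _
      _ ≤ 2 * |c| ^ 0 := by rw [norm_one, pow_zero]; linarith
  | cons i l =>
    rw [mpartial_sub_const, mpartial_comp_smul, norm_smul, norm_pow, Real.norm_eq_abs]
    nlinarith [hl (c • x), pow_nonneg (abs_nonneg c) (i :: l).length]

theorem mpartial_cutoff_smul_eq_zero {R c : ℝ} (h1 : ∀ x, R ≤ ‖x‖ → h x = 1) (hc : 0 < c)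
    {ξ : EuclideanSpace ℝ (Fin d)} (hξ : R / c < ‖ξ‖) (g : EuclideanSpace ℝ (Fin d) → F)
    (l : List (Fin d)) : mpartial l (fun y => (h (c • y) - 1) • g y) ξ = 0 := by
  refine mpartial_eq_zero_of_eventuallyEq_zero ?_ l
  filter_upwards [(isOpen_lt continuous_const continuous_norm).mem_nhds hξ] with y hy
  have hy' : R ≤ ‖c • y‖ := by
    rw [norm_smul, Real.norm_of_nonneg hc.le]
    exact ((div_lt_iff₀' hc).1 hy).le
  simp [h1 _ hy']

theorem norm_pow_mul_norm_mpartial_cutoff_smul_le {k : ℕ} {R γ c : ℝ} (hγ : 0 ≤ γ) (hc : 0 < c)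
    (hsmooth : ContDiff ℝ k h)
    (hCk : ∀ α : List (Fin d), α.length ≤ k → ∀ x, ‖mpartial α h x‖ ≤ 1)
    {ψ : EuclideanSpace ℝ (Fin d) → F} (hψsmooth : ContDiffOn ℝ k ψ {0}ᶜ)
    {α : List (Fin d)} (hα : α.length ≤ k) {ξ : EuclideanSpace ℝ (Fin d)} (hξ : ξ ≠ 0)
    (hξR : ‖ξ‖ ≤ R / c) {C : List (Fin d) × List (Fin d) → ℝ} (hC0 : ∀ p ∈ α.unshuffles, 0 ≤ C p)
    (hC : ∀ p ∈ α.unshuffles, ‖ξ‖ ^ p.2.length * ‖mpartial p.2 ψ ξ‖ ≤ C p * ‖ξ‖ ^ γ) :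
    ‖ξ‖ ^ α.length * ‖mpartial α (fun y => (h (c • y) - 1) • ψ y) ξ‖ ≤
      (α.unshuffles.map fun p => 2 * R ^ p.1.length * C p).sum * (R / c) ^ γ := by
  set G := fun y => h (c • y) - 1
  have hα' : (α.length : WithTop ℕ∞) ≤ k := by exact_mod_cast hα
  have hG : ContDiffOn ℝ α.length G {0}ᶜ :=
    ((hsmooth.comp (contDiff_const_smul c)).sub contDiff_const).contDiffOn.of_le hα'
  have hcξ : 0 ≤ c * ‖ξ‖ := by positivity
  have hcξR : c * ‖ξ‖ ≤ R := by rw [mul_comm]; exact (le_div_iff₀ hc).1 hξR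
  rw [← List.sum_map_mul_right]
  refine (mul_le_mul_of_nonneg_left (norm_mpartial_smul_le_of_isOpen isOpen_compl_singleton hG
    (hψsmooth.of_le hα') hξ) (by positivity)).trans ?_
  rw [← List.sum_map_mul_left]
  refine List.sum_le_sum fun p hp => ?_
  have hlen := List.length_add_length_of_mem_unshuffles hp
  have hGp : ‖ξ‖ ^ p.1.length * ‖mpartial p.1 G ξ‖ ≤ 2 * R ^ p.1.length :=
    calc ‖ξ‖ ^ p.1.length * ‖mpartial p.1 G ξ‖
        ≤ ‖ξ‖ ^ p.1.length * (2 * |c| ^ p.1.length) := by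
          gcongr
          exact norm_mpartial_comp_smul_sub_one_le (hCk _ (by omega)) c ξ
      _ = 2 * (c * ‖ξ‖) ^ p.1.length := by rw [abs_of_pos hc, mul_pow]; ring
      _ ≤ 2 * R ^ p.1.length := by gcongr
  have hψp : ‖ξ‖ ^ p.2.length * ‖mpartial p.2 ψ ξ‖ ≤ C p * (R / c) ^ γ :=
    (hC p hp).trans (by gcongr; exact hC0 p hp)
  calc ‖ξ‖ ^ α.length * (‖mpartial p.1 G ξ‖ * ‖mpartial p.2 ψ ξ‖)
      = (‖ξ‖ ^ p.1.length * ‖mpartial p.1 G ξ‖) * (‖ξ‖ ^ p.2.length * ‖mpartial p.2 ψ ξ‖) := by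
        rw [← hlen, pow_add]; ring
    _ ≤ (2 * R ^ p.1.length) * (C p * (R / c) ^ γ) :=
        mul_le_mul hGp hψp (by positivity) (by have := hcξ.trans hcξR; positivity)
    _ = 2 * R ^ p.1.length * C p * (R / c) ^ γ := by ring

theorem exists_bound_norm_mpartial_cutoff_smul {k : ℕ} {R γ : ℝ} (hR : 0 < R) (hγ : 0 ≤ γ)
    (hsmooth : ContDiff ℝ k h) (h1 : ∀ x, R ≤ ‖x‖ → h x = 1)
    (hCk : ∀ α : List (Fin d), α.length ≤ k → ∀ x, ‖mpartial α h x‖ ≤ 1)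
    {ψ : EuclideanSpace ℝ (Fin d) → F} (hψsmooth : ContDiffOn ℝ k ψ {0}ᶜ)
    (hψ0 : ∀ α : List (Fin d), α.length ≤ k → ∃ C : ℝ, ∀ ξ, 0 < ‖ξ‖ → ‖ξ‖ ≤ 1 →
      ‖ξ‖ ^ ((α.length : ℝ) - γ) * ‖mpartial α ψ ξ‖ ≤ C)
    {α : List (Fin d)} (hα : α.length ≤ k) :
    ∃ K : ℝ, ∀ n : ℕ, R ≤ n → ∀ ξ : EuclideanSpace ℝ (Fin d), ξ ≠ 0 →
      ‖ξ‖ ^ α.length * ‖mpartial α (fun y => (h ((n : ℝ) • y) - 1) • ψ y) ξ‖ ≤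
        K * (R / n) ^ γ := by
  have hψ : ∀ p ∈ α.unshuffles, ∃ C, 0 ≤ C ∧ ∀ ξ : EuclideanSpace ℝ (Fin d), 0 < ‖ξ‖ →
      ‖ξ‖ ≤ 1 → ‖ξ‖ ^ p.2.length * ‖mpartial p.2 ψ ξ‖ ≤ C * ‖ξ‖ ^ γ := by
    intro p hp
    obtain ⟨C, hC⟩ := hψ0 p.2 (by have := List.length_add_length_of_mem_unshuffles hp; omega)
    exact ⟨max C 0, le_max_right _ _, fun ξ hξ hξ1 => pow_mul_le_max_mul_rpow hξ (hC ξ hξ hξ1)⟩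
  choose! C hC0 hC using hψ
  refine ⟨(α.unshuffles.map fun p => 2 * R ^ p.1.length * C p).sum, fun n hn ξ hξ => ?_⟩
  have hn0 : 0 < (n : ℝ) := hR.trans_le hn
  rcases lt_or_ge (R / n) ‖ξ‖ with hfar | hnear
  · rw [mpartial_cutoff_smul_eq_zero h1 hn0 hfar, norm_zero, mul_zero]
    refine mul_nonneg (List.sum_nonneg fun t ht => ?_) (by positivity)
    obtain ⟨p, hp, rfl⟩ := List.mem_map.1 ht
    have := hC0 p hp
    positivity
  · have hξ1 : ‖ξ‖ ≤ 1 := hnear.trans ((div_le_one hn0).2 hn)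
    exact norm_pow_mul_norm_mpartial_cutoff_smul_le hγ hn0 hsmooth hCk hψsmooth hα hξ hnear hC0
      fun p hp => hC p hp ξ (norm_pos_iff.2 hξ) hξ1

end Cutoff

theorem cutoff_approximation_general (d k : ℕ) (R γ : ℝ) (hR : 0 < R) (hγ : 0 < γ)
    (h : EuclideanSpace ℝ (Fin d) → ℝ)
    (hsmooth : ContDiff ℝ k h)
    (h1 : ∀ x, R ≤ ‖x‖ → h x = 1)
    (hCk : ∀ α : List (Fin d), α.length ≤ k → ∀ x, ‖mpartial α h x‖ ≤ 1)
    (ψ : EuclideanSpace ℝ (Fin d) → ℂ)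
    (hψsmooth : ContDiffOn ℝ k ψ {(0 : EuclideanSpace ℝ (Fin d))}ᶜ)
    (hψ0 : ∀ α : List (Fin d), α.length ≤ k → ∃ C : ℝ, ∀ ξ, 0 < ‖ξ‖ → ‖ξ‖ ≤ 1 →
      ‖ξ‖ ^ ((α.length : ℝ) - γ) * ‖mpartial α ψ ξ‖ ≤ C) :
    ∀ α : List (Fin d), α.length ≤ k → ∀ ε : ℝ, 0 < ε → ∃ N : ℕ, ∀ n : ℕ, N ≤ n →
      ∀ ξ : EuclideanSpace ℝ (Fin d), ξ ≠ 0 →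
        ‖ξ‖ ^ (α.length : ℝ) *
          ‖mpartial α (fun ξ' => ((h ((n : ℝ) • ξ') : ℂ) * ψ ξ' - ψ ξ')) ξ‖ ≤ ε := by
  intro α hα ε hε
  obtain ⟨K, hK⟩ := exists_bound_norm_mpartial_cutoff_smul hR hγ.le hsmooth h1 hCk hψsmooth hψ0 hα
  have hlim : Tendsto (fun n : ℕ => K * (R / n) ^ γ) atTop (𝓝 0) := by
    simpa [Real.zero_rpow hγ.ne'] using
      ((tendsto_const_div_atTop_nhds_zero_nat R).rpow_const (Or.inr hγ.le)).const_mul K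
  obtain ⟨N, hN⟩ := eventually_atTop.1
    ((hlim.eventually (ge_mem_nhds hε)).and (eventually_ge_atTop ⌈R⌉₊))
  refine ⟨N, fun n hn ξ hξ => ?_⟩
  have hdiff : (fun ξ' => ((h ((n : ℝ) • ξ') : ℂ) * ψ ξ' - ψ ξ')) =
      fun ξ' => (h ((n : ℝ) • ξ') - 1) • ψ ξ' := by
    funext ξ'
    rw [Complex.real_smul]
    push_cast
    ring
  rw [hdiff, Real.rpow_natCast]
  exact (hK n (Nat.ceil_le.1 (hN n hn).2) ξ hξ).trans (hN n hn).1

/-- Cutoff approximation (Step 2 of the proof of Theorem 2.1): with `h` a `C^k`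
cutoff vanishing at `0`, equal to `1` outside a ball, with `C^k_b`-norm `≤ 1`
and `|∂^α h(x)| ≤ |x|^{k−|α|+1}`, and `ψ ∈ C^k(ℝ^d \ {0})` with the stated
bounds near the origin (with exponent `γ > 0`) and at infinity (index `s > 0`),
the functions `ψ_n(ξ) = h(nξ)ψ(ξ)` satisfy
`sup_{ξ ≠ 0} |ξ|^{|α|} |∂^α(ψ_n − ψ)(ξ)| → 0` for every `|α| ≤ k`. -/
theorem cutoff_approximation (d k : ℕ) (R γ s : ℝ) (hR : 0 < R) (hγ : 0 < γ) (hs : 0 < s)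
    (h : EuclideanSpace ℝ (Fin d) → ℝ)
    (hsmooth : ContDiff ℝ k h)
    (h0 : h 0 = 0)
    (h1 : ∀ x, R ≤ ‖x‖ → h x = 1)
    (hCk : ∀ α : List (Fin d), α.length ≤ k → ∀ x, ‖mpartial α h x‖ ≤ 1)
    (hdecay : ∀ α : List (Fin d), α.length ≤ k → ∀ x,
      ‖mpartial α h x‖ ≤ ‖x‖ ^ ((k : ℝ) - α.length + 1))
    (ψ : EuclideanSpace ℝ (Fin d) → ℂ)
    (hψsmooth : ContDiffOn ℝ k ψ {(0 : EuclideanSpace ℝ (Fin d))}ᶜ)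
    (hψ0 : ∀ α : List (Fin d), α.length ≤ k → ∃ C : ℝ, ∀ ξ, 0 < ‖ξ‖ → ‖ξ‖ ≤ 1 →
      ‖ξ‖ ^ ((α.length : ℝ) - γ) * ‖mpartial α ψ ξ‖ ≤ C)
    (hψInf : ∀ α : List (Fin d), α.length ≤ k → ∃ C : ℝ, ∀ ξ, 1 ≤ ‖ξ‖ →
      (1 + ‖ξ‖ ^ 2) ^ (((α.length : ℝ) - s) / 2) * ‖mpartial α ψ ξ‖ ≤ C) :
    ∀ α : List (Fin d), α.length ≤ k → ∀ ε : ℝ, 0 < ε → ∃ N : ℕ, ∀ n : ℕ, N ≤ n →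
      ∀ ξ : EuclideanSpace ℝ (Fin d), ξ ≠ 0 →
        ‖ξ‖ ^ (α.length : ℝ) *
          ‖mpartial α (fun ξ' => ((h ((n : ℝ) • ξ') : ℂ) * ψ ξ' - ψ ξ')) ξ‖ ≤ ε :=
  cutoff_approximation_general d k R γ hR hγ h hsmooth h1 hCk ψ hψsmooth hψ0
end
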